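/- Let f : {0,1}³ → ℂ be not of product type, and suppose ∂^{i}_{[1,b]}(f) is of product type for every i ∈ {1,2,3} and every b ∈ {1, −1, 𝔦, −𝔦}. Then there exist λ ∈ ℂ and c₁, c₂, c₃ ∈ {1, −1, 𝔦, −𝔦} such that for all (x₁,x₂,x₃) ∈ {0,1}³, f(x₁,x₂,x₃) = λ · c₁^{x₁} c₂^{x₂} c₃^{x₃} · h(x₁+x₂+x₃), where h : {0,1,2,3} → ℂ is given by h(0) = h(1) = 1 and h(2) = h(3) = −1 (i.e., f is a product of unary functions with the symmetric ternary signature [1,1,−1,−1]). -/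
import Mathlib


/-- `h` is in `ℰ`: its support is contained in a pair of antipodal points
`{α, ᾱ}` (over `ℤ₂`, the complement `ᾱ` is `α + 1`). -/
def InE {ι : Type*} (h : (ι → ZMod 2) → ℂ) : Prop :=
  ∃ α : ι → ZMod 2, ∀ x, h x ≠ 0 → x = α ∨ x = α + 1

/-- `f` is of product type (`f ∈ 𝒫`): it factors over a partition of its
variables into signatures from `ℰ`. -/
def IsProductType {ι : Type*} [Fintype ι] [DecidableEq ι]
    (f : (ι → ZMod 2) → ℂ) : Prop :=
  ∃ (k : ℕ) (I : Fin k → Finset ι)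
    (g : (j : Fin k) → ({i // i ∈ I j} → ZMod 2) → ℂ),
    (∀ j, (I j).Nonempty) ∧
    (∀ j j', j ≠ j' → Disjoint (I j) (I j')) ∧
    (∀ i : ι, ∃ j, i ∈ I j) ∧
    (∀ j, InE (g j)) ∧
    ∀ x : ι → ZMod 2, f x = ∏ j, g j (fun i => x i.1)

/-- `∂^{i}_{[a,b]}(f)`: connect the unary signature `[a,b]` to the `i`-th
variable of the ternary signature `f`. -/
def del (f : (Fin 3 → ZMod 2) → ℂ) (i : Fin 3) (a b : ℂ) :
    (Fin 2 → ZMod 2) → ℂ :=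
  fun y => a * f (i.insertNth 0 y) + b * f (i.insertNth 1 y)


open Complex

lemma zmod2_cases (z : ZMod 2) : z = 0 ∨ z = 1 := by revert z; decide

lemma fin2_cases (i : Fin 2) : i = 0 ∨ i = 1 := by omega

lemma binExtract (g : (Fin 2 → ZMod 2) → ℂ) (hg : IsProductType g) :
    g ![0,0] * g ![1,1] = g ![0,1] * g ![1,0]
    ∨ (g ![0,0] = 0 ∧ g ![1,1] = 0)
    ∨ (g ![0,1] = 0 ∧ g ![1,0] = 0) := by
  obtain ⟨k, I, gg, hne, hdisj, hcov, hInE, hval⟩ := hg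
  obtain ⟨j0, hj0⟩ := hcov 0
  obtain ⟨j1, hj1⟩ := hcov 1
  by_cases hjj : j0 = j1
  · -- single block
    subst hjj
    have hall : ∀ j, j = j0 := by
      intro j
      by_contra hne'
      obtain ⟨i, hi⟩ := hne j
      have hd := hdisj j j0 hne'
      have hi' : i ∈ I j0 := by rcases fin2_cases i with h | h <;> subst h <;> assumption
      exact (Finset.disjoint_left.1 hd) hi hi'
    have huniv : (Finset.univ : Finset (Fin k)) = {j0} := by
      apply Finset.eq_singleton_iff_unique_mem.2
      exact ⟨Finset.mem_univ _, fun j _ => hall j⟩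
    have hval' : ∀ x, g x = gg j0 (fun i => x i.1) := by
      intro x; rw [hval x, huniv, Finset.prod_singleton]
    obtain ⟨α, hα⟩ := hInE j0
    have hmem : ∀ i : Fin 2, i ∈ I j0 := by
      intro i; rcases fin2_cases i with h | h <;> subst h <;> assumption
    set β : Fin 2 → ZMod 2 := fun i => α ⟨i, hmem i⟩ with hβ
    have hsupp : ∀ x, g x ≠ 0 → x = β ∨ x = β + 1 := by
      intro x hx
      rw [hval'] at hx
      rcases hα _ hx with h | h
      · left; funext i
        exact congrFun h ⟨i, hmem i⟩
      · right; funext i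
        exact congrFun h ⟨i, hmem i⟩
    -- now case on β values
    have key : ∀ x : Fin 2 → ZMod 2, (x 0 ≠ β 0 ∨ x 1 ≠ β 1) →
        (x 0 ≠ β 0 + 1 ∨ x 1 ≠ β 1 + 1) → g x = 0 := by
      intro x h1 h2
      by_contra hx
      rcases hsupp x hx with h | h
      · rcases h1 with h1 | h1 <;> [exact h1 (congrFun h 0); exact h1 (congrFun h 1)]
      · rcases h2 with h2 | h2 <;>
          [exact h2 (congrFun h 0); exact h2 (congrFun h 1)]
    rcases zmod2_cases (β 0) with h0 | h0 <;> rcases zmod2_cases (β 1) with h1 | h1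
    · right; right
      constructor <;> apply key <;> simp [h0, h1] <;> decide
    · right; left
      constructor <;> apply key <;> simp [h0, h1] <;> decide
    · right; left
      constructor <;> apply key <;> simp [h0, h1] <;> decide
    · right; right
      constructor <;> apply key <;> simp [h0, h1] <;> decide
  · -- two singleton blocks
    have hmem0 : ∀ p, p ∈ I j0 → p = 0 := by
      intro p hp
      rcases fin2_cases p with h | h
      · exact h
      · subst h
        exact absurd hp (Finset.disjoint_right.1 (hdisj j0 j1 hjj) hj1)
    have hmem1 : ∀ p, p ∈ I j1 → p = 1 := by
      intro p hp
      rcases fin2_cases p with h | h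
      · subst h
        exact absurd hj0 (Finset.disjoint_right.1 (hdisj j0 j1 hjj) hp)
      · exact h
    have hall : ∀ j, j = j0 ∨ j = j1 := by
      intro j
      by_contra hne'
      push_neg at hne'
      obtain ⟨i, hi⟩ := hne j
      rcases fin2_cases i with h | h <;> subst h
      · exact (Finset.disjoint_left.1 (hdisj j j0 hne'.1)) hi hj0
      · exact (Finset.disjoint_left.1 (hdisj j j1 hne'.2)) hi hj1
    have huniv : (Finset.univ : Finset (Fin k)) = {j0, j1} := by
      apply Finset.Subset.antisymm
      · intro j _
        rcases hall j with h | h <;> simp [h]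
      · intro j _; exact Finset.mem_univ _
    have hval' : ∀ x, g x = gg j0 (fun i => x i.1) * gg j1 (fun i => x i.1) := by
      intro x; rw [hval x, huniv, Finset.prod_pair hjj]
    have hrestr0 : ∀ x : Fin 2 → ZMod 2,
        (fun (p : {i // i ∈ I j0}) => x p.1) = fun _ => x 0 := by
      intro x; funext p; rw [hmem0 p.1 p.2]
    have hrestr1 : ∀ x : Fin 2 → ZMod 2,
        (fun (p : {i // i ∈ I j1}) => x p.1) = fun _ => x 1 := by
      intro x; funext p; rw [hmem1 p.1 p.2]
    have hval'' : ∀ x, g x = gg j0 (fun _ => x 0) * gg j1 (fun _ => x 1) := by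
      intro x; rw [hval' x, hrestr0, hrestr1]
    left
    rw [hval'' ![0,0], hval'' ![1,1], hval'' ![0,1], hval'' ![1,0]]
    simp only [Matrix.cons_val_zero, Matrix.cons_val_one, Matrix.head_cons]
    ring

lemma vecEq3 (x : Fin 3 → ZMod 2) : x = ![x 0, x 1, x 2] := by
  funext j; fin_cases j <;> rfl

lemma vecEq2 (x : Fin 2 → ZMod 2) : x = ![x 0, x 1] := by
  funext j; fin_cases j <;> rfl

lemma ins0 (v : ZMod 2) (y : Fin 2 → ZMod 2) :
    (0 : Fin 3).insertNth v y = ![v, y 0, y 1] := by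
  funext j; fin_cases j <;> simp [Fin.insertNth] <;> rfl

lemma ins1 (v : ZMod 2) (y : Fin 2 → ZMod 2) :
    (1 : Fin 3).insertNth v y = ![y 0, v, y 1] := by
  funext j; fin_cases j <;> simp [Fin.insertNth] <;> rfl

lemma ins2 (v : ZMod 2) (y : Fin 2 → ZMod 2) :
    (2 : Fin 3).insertNth v y = ![y 0, y 1, v] := by
  funext j; fin_cases j <;> simp [Fin.insertNth] <;> rfl

/-- antipodal support ⇒ product type (single block) -/
lemma builder_antipodal (f : (Fin 3 → ZMod 2) → ℂ) (β : Fin 3 → ZMod 2)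
    (hsupp : ∀ x, f x ≠ 0 → x = β ∨ x = β + 1) : IsProductType f := by
  refine ⟨1, fun _ => Finset.univ, fun _ y => f (fun i => y ⟨i, Finset.mem_univ i⟩),
    fun _ => ⟨0, Finset.mem_univ 0⟩, fun j j' hjj => absurd (Subsingleton.elim j j') hjj,
    fun i => ⟨0, Finset.mem_univ i⟩, ?_, ?_⟩
  · intro j
    refine ⟨fun p => β p.1, fun y hy => ?_⟩
    rcases hsupp _ hy with h | h
    · left; funext p; exact congrFun h p.1
    · right; funext p; exact congrFun h p.1
  · intro x
    rw [Fin.prod_univ_one]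

/-- unary at each variable ⇒ product type -/
lemma builder3 (f : (Fin 3 → ZMod 2) → ℂ) (u v w : ZMod 2 → ℂ)
    (hval : ∀ x, f x = u (x 0) * v (x 1) * w (x 2)) : IsProductType f := by
  have subsing : ∀ (S : Finset (Fin 3)) (hS : ∀ p ∈ S, ∀ q ∈ S, p = q)
      (h : ({i // i ∈ S} → ZMod 2) → ℂ), InE h := by
    intro S hS h
    refine ⟨fun _ => 0, fun y hy => ?_⟩
    by_cases h0 : ∀ p, y p = 0
    · left; funext p; exact h0 p
    · right
      push_neg at h0
      obtain ⟨p0, hp0⟩ := h0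
      have h1 : y p0 = 1 := (zmod2_cases (y p0)).resolve_left hp0
      funext p
      have : p = p0 := Subtype.ext (hS p.1 p.2 p0.1 p0.2)
      rw [this, h1]; rfl
  refine ⟨3, fun j => {j}, fun j y => ![u, v, w] j
      ((fun i => if h : i ∈ ({j} : Finset (Fin 3)) then y ⟨i, h⟩ else 0) j),
    fun j => ⟨j, Finset.mem_singleton_self j⟩,
    fun j j' hjj => Finset.disjoint_singleton.mpr hjj,
    fun i => ⟨i, Finset.mem_singleton_self i⟩, ?_, ?_⟩
  · intro j
    apply subsing
    intro p hp q hq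
    rw [Finset.mem_singleton.1 hp, Finset.mem_singleton.1 hq]
  · intro x
    rw [Fin.prod_univ_three, hval]
    simp
/-- unary ⊗ (binary with antipodal support) ⇒ product type.
    hCd : C supported on diagonal, or hCa : antidiagonal -/
lemma builder21 (f : (Fin 3 → ZMod 2) → ℂ) (i0 i1 i2 : Fin 3)
    (h01 : i0 ≠ i1) (h02 : i0 ≠ i2) (h12 : i1 ≠ i2)
    (hperm : ∀ i : Fin 3, i = i0 ∨ i = i1 ∨ i = i2)
    (u : ZMod 2 → ℂ) (C : ZMod 2 → ZMod 2 → ℂ)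
    (hC : (∀ y z, C y z ≠ 0 → z = y) ∨ (∀ y z, C y z ≠ 0 → z = y + 1))
    (hval : ∀ x, f x = u (x i0) * C (x i1) (x i2)) : IsProductType f := by
  classical
  set I : Fin 2 → Finset (Fin 3) := fun j => if j = 0 then {i0} else {i1, i2} with hI
  refine ⟨2, I, fun j y =>
      (fun ey => if j = 0 then u (ey i0) else C (ey i1) (ey i2))
      (fun i => if h : i ∈ I j then y ⟨i, h⟩ else 0),
    ?_, ?_, ?_, ?_, ?_⟩
  · intro j
    by_cases hj : j = 0 <;> simp [hI, hj]
  · intro j j' hjj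
    have : (j = 0 ∧ j' = 1) ∨ (j = 1 ∧ j' = 0) := by omega
    rcases this with ⟨hj, hj'⟩ | ⟨hj, hj'⟩ <;> subst hj <;> subst hj'
    · simp [hI, Finset.disjoint_left, h01, h02]
    · simp [hI, Finset.disjoint_left]
      exact ⟨fun hx => h01 hx.symm, fun hx => h02 hx.symm⟩
  · intro i
    rcases hperm i with h | h | h <;> subst h
    · exact ⟨0, by simp [hI]⟩
    · exact ⟨1, by simp [hI]⟩
    · exact ⟨1, by simp [hI]⟩
  · intro j
    by_cases hj : j = 0
    · subst hj
      -- unary block, singleton domain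
      have hmem : i0 ∈ I 0 := by simp [hI]
      refine ⟨fun _ => 0, fun y hy => ?_⟩
      have hp : ∀ p : {i // i ∈ I 0}, p = ⟨i0, hmem⟩ := by
        intro p
        have h2 : p.1 ∈ ({i0} : Finset (Fin 3)) := by
          have := p.2; simpa [hI] using this
        exact Subtype.ext (Finset.mem_singleton.1 h2)
      by_cases h0 : y ⟨i0, hmem⟩ = 0
      · left; funext p; rw [hp p, h0]
      · right; funext p
        have h1 : y ⟨i0, hmem⟩ = 1 := (zmod2_cases _).resolve_left h0
        rw [hp p, h1]; rfl
    · have hj1 : j = 1 := by omega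
      subst hj1
      have hm1 : i1 ∈ I 1 := by simp [hI]
      have hm2 : i2 ∈ I 1 := by simp [hI]
      have hp : ∀ p : {i // i ∈ I 1}, p = ⟨i1, hm1⟩ ∨ p = ⟨i2, hm2⟩ := by
        intro p
        have h2 : p.1 ∈ ({i1, i2} : Finset (Fin 3)) := by
          have := p.2; simpa [hI] using this
        rcases Finset.mem_insert.1 h2 with h | h
        · left; exact Subtype.ext h
        · right; exact Subtype.ext (Finset.mem_singleton.1 h)
      rcases hC with hCd | hCa
      · refine ⟨fun _ => 0, fun y hy => ?_⟩
        have hy' : C (y ⟨i1, hm1⟩) (y ⟨i2, hm2⟩) ≠ 0 := by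
          simpa [hI] using hy
        have heq := hCd _ _ hy'
        by_cases h0 : y ⟨i1, hm1⟩ = 0
        · left; funext p
          rcases hp p with h | h <;> rw [h]
          · exact h0
          · rw [heq]; exact h0
        · right
          have h1 : y ⟨i1, hm1⟩ = 1 := (zmod2_cases _).resolve_left h0
          funext p
          rcases hp p with h | h <;> rw [h] <;> simp [heq, h1]
      · refine ⟨fun p => if p.1 = i1 then 0 else 1, fun y hy => ?_⟩
        have hy' : C (y ⟨i1, hm1⟩) (y ⟨i2, hm2⟩) ≠ 0 := by
          simpa [hI] using hy
        have heq := hCa _ _ hy'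
        by_cases h0 : y ⟨i1, hm1⟩ = 0
        · left; funext p
          rcases hp p with h | h <;> rw [h] <;> simp [h12.symm]
          · exact h0
          · rw [heq, h0]; rfl
        · right
          have h1 : y ⟨i1, hm1⟩ = 1 := (zmod2_cases _).resolve_left h0
          funext p
          rcases hp p with h | h <;> rw [h] <;> simp [h12.symm, heq, h1]
  · intro x
    rw [Fin.prod_univ_two, hval x]
    simp [hI]

lemma cube_cases (x : Fin 3 → ZMod 2) :
    x = ![0,0,0] ∨ x = ![0,0,1] ∨ x = ![0,1,0] ∨ x = ![0,1,1] ∨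
    x = ![1,0,0] ∨ x = ![1,0,1] ∨ x = ![1,1,0] ∨ x = ![1,1,1] := by
  rcases zmod2_cases (x 0) with h0 | h0 <;> rcases zmod2_cases (x 1) with h1 | h1 <;>
    rcases zmod2_cases (x 2) with h2 | h2 <;> rw [vecEq3 x, h0, h1, h2] <;> tauto

lemma rank1 (p q r s : ℂ) (h : p * s = q * r) :
    ∃ u0 u1 v0 v1 : ℂ, p = u0*v0 ∧ q = u0*v1 ∧ r = u1*v0 ∧ s = u1*v1 := by
  by_cases hp : p ≠ 0
  · refine ⟨p, r, 1, q / p, by ring, by field_simp, by ring, ?_⟩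
    field_simp
    linear_combination h
  · push_neg at hp
    subst hp
    simp only [zero_mul] at h
    by_cases hq : q = 0
    · subst hq
      exact ⟨0, 1, r, s, by ring, by ring, by ring, by ring⟩
    · have hr : r = 0 := by
        rcases mul_eq_zero.1 h.symm with h' | h'
        · exact absurd h' hq
        · exact h'
      subst hr
      exact ⟨q, s, 0, 1, by ring, by ring, by ring, by ring⟩

/-- product structure at value level -/
def PS (a b c d e g h k : ℂ) : Prop :=
  (∃ p0 p1 q0 q1 r0 r1 : ℂ, a = p0*q0*r0 ∧ b = p0*q0*r1 ∧ c = p0*q1*r0 ∧ d = p0*q1*r1 ∧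
      e = p1*q0*r0 ∧ g = p1*q0*r1 ∧ h = p1*q1*r0 ∧ k = p1*q1*r1)
  ∨ (b=0∧c=0∧g=0∧h=0 ∧ a*k=d*e)
  ∨ (a=0∧d=0∧e=0∧k=0 ∧ b*h=c*g)
  ∨ (b=0∧d=0∧e=0∧h=0 ∧ a*k=c*g)
  ∨ (a=0∧c=0∧g=0∧k=0 ∧ b*h=d*e)
  ∨ (c=0∧d=0∧e=0∧g=0 ∧ a*k=b*h)
  ∨ (a=0∧b=0∧h=0∧k=0 ∧ c*g=d*e)
  ∨ (b=0∧c=0∧d=0∧e=0∧g=0∧h=0)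
  ∨ (a=0∧c=0∧d=0∧e=0∧g=0∧k=0)
  ∨ (a=0∧b=0∧d=0∧e=0∧h=0∧k=0)
  ∨ (a=0∧b=0∧c=0∧g=0∧h=0∧k=0)

lemma ps_implies (f : (Fin 3 → ZMod 2) → ℂ)
    (hPS : PS (f ![0,0,0]) (f ![0,0,1]) (f ![0,1,0]) (f ![0,1,1])
              (f ![1,0,0]) (f ![1,0,1]) (f ![1,1,0]) (f ![1,1,1])) :
    IsProductType f := by
  have hne10 : (1 : ZMod 2) ≠ 0 := by decide
  have hne01 : (0 : ZMod 2) ≠ 1 := by decide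
  have htt : (1 + 1 : ZMod 2) = 0 := by decide
  rcases hPS with ⟨p0,p1,q0,q1,r0,r1,ha,hb,hc,hd,he,hg,hh,hk⟩ |
    ⟨hb,hc,hg,hh,hdet⟩ | ⟨ha,hd,he,hk,hdet⟩ | ⟨hb,hd,he,hh,hdet⟩ |
    ⟨ha,hc,hg,hk,hdet⟩ | ⟨hc,hd,he,hg,hdet⟩ | ⟨ha,hb,hh,hk,hdet⟩ |
    ⟨hb,hc,hd,he,hg,hh⟩ | ⟨ha,hc,hd,he,hg,hk⟩ | ⟨ha,hb,hd,he,hh,hk⟩ |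
    ⟨ha,hb,hc,hg,hh,hk⟩
  · -- P1
    apply builder3 f (fun z => if z = 0 then p0 else p1)
      (fun z => if z = 0 then q0 else q1) (fun z => if z = 0 then r0 else r1)
    intro x
    rcases cube_cases x with hx|hx|hx|hx|hx|hx|hx|hx <;> rw [hx] <;>
      simp [ha,hb,hc,hd,he,hg,hh,hk,hne10]
  · -- x0 unary, diag
    obtain ⟨u0,u1,v0,v1,h1,h2,h3,h4⟩ := rank1 _ _ _ _ hdet
    apply builder21 f 0 1 2 (by decide) (by decide) (by decide) (by decide)
      (fun z => if z = 0 then u0 else u1)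
      (fun y z => if z = y then (if y = 0 then v0 else v1) else 0)
      (Or.inl (fun y z hyz => by by_contra hne; exact hyz (if_neg hne)))
    intro x
    rcases cube_cases x with hx|hx|hx|hx|hx|hx|hx|hx <;> rw [hx] <;>
      simp [hb,hc,hg,hh,h1,h2,h3,h4,hne10,hne01]
  · -- x0 unary, anti
    obtain ⟨u0,u1,v0,v1,h1,h2,h3,h4⟩ := rank1 _ _ _ _ hdet
    apply builder21 f 0 1 2 (by decide) (by decide) (by decide) (by decide)
      (fun z => if z = 0 then u0 else u1)
      (fun y z => if z = y + 1 then (if y = 0 then v0 else v1) else 0)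
      (Or.inr (fun y z hyz => by by_contra hne; exact hyz (if_neg hne)))
    intro x
    rcases cube_cases x with hx|hx|hx|hx|hx|hx|hx|hx <;> rw [hx] <;>
      simp [ha,hd,he,hk,h1,h2,h3,h4,hne10,hne01,htt]
  · -- x1 unary, diag
    obtain ⟨u0,u1,v0,v1,h1,h2,h3,h4⟩ := rank1 (f ![0,0,0]) (f ![1,0,1]) (f ![0,1,0]) (f ![1,1,1]) (by linear_combination hdet)
    apply builder21 f 1 0 2 (by decide) (by decide) (by decide) (by decide)
      (fun z => if z = 0 then u0 else u1)
      (fun y z => if z = y then (if y = 0 then v0 else v1) else 0)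
      (Or.inl (fun y z hyz => by by_contra hne; exact hyz (if_neg hne)))
    intro x
    rcases cube_cases x with hx|hx|hx|hx|hx|hx|hx|hx <;> rw [hx] <;>
      simp [hb,hd,he,hh,h1,h2,h3,h4,hne10,hne01]
  · -- x1 unary, anti
    obtain ⟨u0,u1,v0,v1,h1,h2,h3,h4⟩ := rank1 (f ![0,0,1]) (f ![1,0,0]) (f ![0,1,1]) (f ![1,1,0]) (by linear_combination hdet)
    apply builder21 f 1 0 2 (by decide) (by decide) (by decide) (by decide)
      (fun z => if z = 0 then u0 else u1)
      (fun y z => if z = y + 1 then (if y = 0 then v0 else v1) else 0)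
      (Or.inr (fun y z hyz => by by_contra hne; exact hyz (if_neg hne)))
    intro x
    rcases cube_cases x with hx|hx|hx|hx|hx|hx|hx|hx <;> rw [hx] <;>
      simp [ha,hc,hg,hk,h1,h2,h3,h4,hne10,hne01,htt]
  · -- x2 unary, diag
    obtain ⟨u0,u1,v0,v1,h1,h2,h3,h4⟩ := rank1 (f ![0,0,0]) (f ![1,1,0]) (f ![0,0,1]) (f ![1,1,1]) (by linear_combination hdet)
    apply builder21 f 2 0 1 (by decide) (by decide) (by decide) (by decide)
      (fun z => if z = 0 then u0 else u1)
      (fun y z => if z = y then (if y = 0 then v0 else v1) else 0)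
      (Or.inl (fun y z hyz => by by_contra hne; exact hyz (if_neg hne)))
    intro x
    rcases cube_cases x with hx|hx|hx|hx|hx|hx|hx|hx <;> rw [hx] <;>
      simp [hc,hd,he,hg,h1,h2,h3,h4,hne10,hne01]
  · -- x2 unary, anti
    obtain ⟨u0,u1,v0,v1,h1,h2,h3,h4⟩ := rank1 (f ![0,1,0]) (f ![1,0,0]) (f ![0,1,1]) (f ![1,0,1]) (by linear_combination hdet)
    apply builder21 f 2 0 1 (by decide) (by decide) (by decide) (by decide)
      (fun z => if z = 0 then u0 else u1)
      (fun y z => if z = y + 1 then (if y = 0 then v0 else v1) else 0)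
      (Or.inr (fun y z hyz => by by_contra hne; exact hyz (if_neg hne)))
    intro x
    rcases cube_cases x with hx|hx|hx|hx|hx|hx|hx|hx <;> rw [hx] <;>
      simp [ha,hb,hh,hk,h1,h2,h3,h4,hne10,hne01,htt]
  · -- supp {000,111}
    apply builder_antipodal f ![0,0,0]
    intro x hx
    rcases cube_cases x with hx'|hx'|hx'|hx'|hx'|hx'|hx'|hx' <;> rw [hx'] at hx ⊢ <;>
      first
        | (left; decide)
        | (right; decide)
        | (exact absurd (by assumption) hx)
  · apply builder_antipodal f ![0,0,1]
    intro x hx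
    rcases cube_cases x with hx'|hx'|hx'|hx'|hx'|hx'|hx'|hx' <;> rw [hx'] at hx ⊢ <;>
      first
        | (left; decide)
        | (right; decide)
        | (exact absurd (by assumption) hx)
  · apply builder_antipodal f ![0,1,0]
    intro x hx
    rcases cube_cases x with hx'|hx'|hx'|hx'|hx'|hx'|hx'|hx' <;> rw [hx'] at hx ⊢ <;>
      first
        | (left; decide)
        | (right; decide)
        | (exact absurd (by assumption) hx)
  · apply builder_antipodal f ![0,1,1]
    intro x hx
    rcases cube_cases x with hx'|hx'|hx'|hx'|hx'|hx'|hx'|hx' <;> rw [hx'] at hx ⊢ <;>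
      first
        | (left; decide)
        | (right; decide)
        | (exact absurd (by assumption) hx)

lemma ps_rot {a b c d e g h k : ℂ} (hps : PS a e b g c h d k) : PS a b c d e g h k := by
  rcases hps with ⟨p0,p1,q0,q1,r0,r1,h1,h2,h3,h4,h5,h6,h7,h8⟩ |
    ⟨h1,h2,h3,h4,h5⟩ | ⟨h1,h2,h3,h4,h5⟩ | ⟨h1,h2,h3,h4,h5⟩ | ⟨h1,h2,h3,h4,h5⟩ |
    ⟨h1,h2,h3,h4,h5⟩ | ⟨h1,h2,h3,h4,h5⟩ |
    ⟨h1,h2,h3,h4,h5,h6⟩ | ⟨h1,h2,h3,h4,h5,h6⟩ | ⟨h1,h2,h3,h4,h5,h6⟩ | ⟨h1,h2,h3,h4,h5,h6⟩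
  · exact Or.inl ⟨r0,r1,p0,p1,q0,q1, by linear_combination h1, by linear_combination h3,
      by linear_combination h5, by linear_combination h7, by linear_combination h2,
      by linear_combination h4, by linear_combination h6, by linear_combination h8⟩
  · -- G V2 → F V4
    exact Or.inr (Or.inr (Or.inr (Or.inl ⟨h2,h4,h1,h3, by linear_combination h5⟩)))
  · -- G V3 → F V5
    exact Or.inr (Or.inr (Or.inr (Or.inr (Or.inl ⟨h1,h3,h2,h4, by linear_combination -h5⟩))))
  · -- G V4 → F V6
    exact Or.inr (Or.inr (Or.inr (Or.inr (Or.inr (Or.inl ⟨h3,h4,h1,h2, by linear_combination h5⟩)))))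
  · -- G V5 → F V7
    exact Or.inr (Or.inr (Or.inr (Or.inr (Or.inr (Or.inr (Or.inl ⟨h1,h2,h3,h4, by linear_combination -h5⟩))))))
  · -- G V6 → F V2
    exact Or.inr (Or.inl ⟨h1,h3,h2,h4, by linear_combination h5⟩)
  · -- G V7 → F V3
    exact Or.inr (Or.inr (Or.inl ⟨h1,h3,h2,h4, by linear_combination h5⟩))
  · -- G V8 → F V8
    exact Or.inr (Or.inr (Or.inr (Or.inr (Or.inr (Or.inr (Or.inr (Or.inl ⟨h2,h4,h6,h1,h3,h5⟩)))))))
  · -- G V9 → F V11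
    exact Or.inr (Or.inr (Or.inr (Or.inr (Or.inr (Or.inr (Or.inr (Or.inr (Or.inr (Or.inr ⟨h1,h2,h4,h3,h5,h6⟩)))))))))
  · -- G V10 → F V9
    exact Or.inr (Or.inr (Or.inr (Or.inr (Or.inr (Or.inr (Or.inr (Or.inr (Or.inl ⟨h1,h4,h5,h2,h3,h6⟩))))))))
  · -- G V11 → F V10
    exact Or.inr (Or.inr (Or.inr (Or.inr (Or.inr (Or.inr (Or.inr (Or.inr (Or.inr (Or.inl ⟨h1,h3,h5,h2,h4,h6⟩)))))))))

lemma quadZero {A B C : ℂ} (t1 t2 t3 : ℂ) (h12 : t1 ≠ t2) (h13 : t1 ≠ t3) (h23 : t2 ≠ t3)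
    (e1 : A + B*t1 + C*t1^2 = 0) (e2 : A + B*t2 + C*t2^2 = 0) (e3 : A + B*t3 + C*t3^2 = 0) :
    A = 0 ∧ B = 0 ∧ C = 0 := by
  have f1 : (t1 - t2) * (B + C*(t1+t2)) = 0 := by linear_combination e1 - e2
  have f2 : (t1 - t3) * (B + C*(t1+t3)) = 0 := by linear_combination e1 - e3
  have g1 : B + C*(t1+t2) = 0 :=
    (mul_eq_zero.1 f1).resolve_left (sub_ne_zero.2 h12)
  have g2 : B + C*(t1+t3) = 0 :=
    (mul_eq_zero.1 f2).resolve_left (sub_ne_zero.2 h13)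
  have f3 : (t2 - t3) * C = 0 := by linear_combination g1 - g2
  have hC : C = 0 := (mul_eq_zero.1 f3).resolve_left (sub_ne_zero.2 h23)
  have hB : B = 0 := by linear_combination g1 - (t1+t2)*hC
  exact ⟨by linear_combination e1 - t1*hB - t1^2*hC, hB, hC⟩

section axis
variable {a b c d e g h k : ℂ}

lemma subQuad (t1 t2 t3 : ℂ) (h12 : t1 ≠ t2) (h13 : t1 ≠ t3) (h23 : t2 ≠ t3)
    (d1 : (a + t1*b)*(h + t1*k) = (c + t1*d)*(e + t1*g))
    (d2 : (a + t2*b)*(h + t2*k) = (c + t2*d)*(e + t2*g))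
    (d3 : (a + t3*b)*(h + t3*k) = (c + t3*d)*(e + t3*g)) :
    a*h = c*e ∧ a*k + b*h = c*g + d*e ∧ b*k = d*g := by
  have q := quadZero (A := a*h - c*e) (B := a*k + b*h - c*g - d*e) (C := b*k - d*g) t1 t2 t3 h12 h13 h23
    (by linear_combination d1) (by linear_combination d2) (by linear_combination d3)
  refine ⟨by linear_combination q.1, by linear_combination q.2.1, by linear_combination q.2.2⟩

lemma subB (t1 t2 : ℂ) (hne : t1 ≠ t2)
    (s1 : a + t1*b = 0 ∧ h + t1*k = 0) (s2 : a + t2*b = 0 ∧ h + t2*k = 0) :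
    a = 0 ∧ b = 0 ∧ h = 0 ∧ k = 0 := by
  have hb : (t1 - t2) * b = 0 := by linear_combination s1.1 - s2.1
  have hk : (t1 - t2) * k = 0 := by linear_combination s1.2 - s2.2
  have hb0 : b = 0 := (mul_eq_zero.1 hb).resolve_left (sub_ne_zero.2 hne)
  have hk0 : k = 0 := (mul_eq_zero.1 hk).resolve_left (sub_ne_zero.2 hne)
  exact ⟨by linear_combination s1.1 - t1*hb0, hb0, by linear_combination s1.2 - t1*hk0, hk0⟩

lemma subC (t1 t2 : ℂ) (hne : t1 ≠ t2)
    (s1 : c + t1*d = 0 ∧ e + t1*g = 0) (s2 : c + t2*d = 0 ∧ e + t2*g = 0) :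
    c = 0 ∧ d = 0 ∧ e = 0 ∧ g = 0 := by
  have r := subB (a := c) (b := d) (h := e) (k := g) t1 t2 hne s1 s2
  exact ⟨r.1, r.2.1, r.2.2.1, r.2.2.2⟩

lemma subGood (τ τ' : ℂ) (hττ' : τ + τ' = 0)
    (s1 : a + τ*b = 0 ∧ h + τ*k = 0) (s2 : c + τ'*d = 0 ∧ e + τ'*g = 0) :
    a + τ*b = 0 ∧ h + τ*k = 0 ∧ c = τ*d ∧ e = τ*g :=
  ⟨s1.1, s1.2, by linear_combination s2.1 - d*hττ', by linear_combination s2.2 - g*hττ'⟩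

lemma subBad (t1 t2 t3 t4 : ℂ)
    (hΔ : (t3-t1)^2*(t4-t2)^2 - (t4-t1)^2*(t3-t2)^2 ≠ 0)
    (s1 : a + t1*b = 0 ∧ h + t1*k = 0) (s2 : c + t2*d = 0 ∧ e + t2*g = 0)
    (d3 : (a + t3*b)*(h + t3*k) = (c + t3*d)*(e + t3*g))
    (d4 : (a + t4*b)*(h + t4*k) = (c + t4*d)*(e + t4*g)) :
    ((a=0∧b=0) ∨ (h=0∧k=0)) ∧ ((c=0∧d=0) ∨ (e=0∧g=0)) := by
  have e3 : b*k*(t3-t1)^2 - d*g*(t3-t2)^2 = 0 := by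
    linear_combination d3 + (t1-t3)*k*s1.1 - (a + t3*b)*s1.2 - (t2-t3)*g*s2.1 + (c + t3*d)*s2.2
  have e4 : b*k*(t4-t1)^2 - d*g*(t4-t2)^2 = 0 := by
    linear_combination d4 + (t1-t4)*k*s1.1 - (a + t4*b)*s1.2 - (t2-t4)*g*s2.1 + (c + t4*d)*s2.2
  have hX : b*k * ((t3-t1)^2*(t4-t2)^2 - (t4-t1)^2*(t3-t2)^2) = 0 := by
    linear_combination (t4-t2)^2 * e3 - (t3-t2)^2 * e4
  have hY : d*g * ((t3-t1)^2*(t4-t2)^2 - (t4-t1)^2*(t3-t2)^2) = 0 := by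
    linear_combination (t4-t1)^2 * e3 - (t3-t1)^2 * e4
  have hbk : b*k = 0 := by
    rcases mul_eq_zero.1 hX with hh | hh
    · exact hh
    · exact absurd hh hΔ
  have hdg : d*g = 0 := by
    rcases mul_eq_zero.1 hY with hh | hh
    · exact hh
    · exact absurd hh hΔ
  constructor
  · rcases mul_eq_zero.1 hbk with hh | hh
    · exact Or.inl ⟨by linear_combination s1.1 - t1*hh, hh⟩
    · exact Or.inr ⟨by linear_combination s1.2 - t1*hh, hh⟩
  · rcases mul_eq_zero.1 hdg with hh | hh
    · exact Or.inl ⟨by linear_combination s2.1 - t2*hh, hh⟩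
    · exact Or.inr ⟨by linear_combination s2.2 - t2*hh, hh⟩

end axis

lemma parCoef (w0 w1 p0 p1 : ℂ) (hw : ¬(w0 = 0 ∧ w1 = 0)) (hdet : p0*w1 = p1*w0) :
    ∃ cp, p0 = cp*w0 ∧ p1 = cp*w1 := by
  by_cases h0 : w0 = 0
  · have h1 : w1 ≠ 0 := fun h1 => hw ⟨h0, h1⟩
    have hp0 : p0 = 0 := by
      have : p0 * w1 = 0 := by rw [hdet, h0, mul_zero]
      exact (mul_eq_zero.1 this).resolve_right h1
    exact ⟨p1/w1, by rw [hp0, h0, mul_zero], by field_simp⟩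
  · refine ⟨p0/w0, by field_simp, ?_⟩
    field_simp
    linear_combination -hdet

section
variable {a b c d e g h k : ℂ}

def ROWS (a b c d e g h k : ℂ) : Prop :=
  ∃ w0 w1 C00 C01 C10 C11 : ℂ, ¬(w0=0 ∧ w1=0) ∧
    a = C00*w0 ∧ c = C00*w1 ∧ b = C01*w0 ∧ d = C01*w1 ∧
    e = C10*w0 ∧ h = C10*w1 ∧ g = C11*w0 ∧ k = C11*w1

def COLS (a b c d e g h k : ℂ) : Prop :=
  ∃ w0 w1 C00 C01 C10 C11 : ℂ, ¬(w0=0 ∧ w1=0) ∧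
    a = C00*w0 ∧ e = C00*w1 ∧ b = C01*w0 ∧ g = C01*w1 ∧
    c = C10*w0 ∧ h = C10*w1 ∧ d = C11*w0 ∧ k = C11*w1

lemma mkRows (w0 w1 : ℂ) (hw : ¬(w0=0 ∧ w1=0)) (e1 : a*w1 = c*w0) (e2 : b*w1 = d*w0)
    (e3 : e*w1 = h*w0) (e4 : g*w1 = k*w0) : ROWS a b c d e g h k := by
  obtain ⟨c0, hc01, hc02⟩ := parCoef w0 w1 a c hw e1
  obtain ⟨c1, hc11, hc12⟩ := parCoef w0 w1 b d hw e2
  obtain ⟨c2, hc21, hc22⟩ := parCoef w0 w1 e h hw e3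
  obtain ⟨c3, hc31, hc32⟩ := parCoef w0 w1 g k hw e4
  exact ⟨w0, w1, c0, c1, c2, c3, hw, hc01, hc02, hc11, hc12, hc21, hc22, hc31, hc32⟩

lemma mkCols (w0 w1 : ℂ) (hw : ¬(w0=0 ∧ w1=0)) (e1 : a*w1 = e*w0) (e2 : b*w1 = g*w0)
    (e3 : c*w1 = h*w0) (e4 : d*w1 = k*w0) : COLS a b c d e g h k := by
  obtain ⟨c0, hc01, hc02⟩ := parCoef w0 w1 a e hw e1
  obtain ⟨c1, hc11, hc12⟩ := parCoef w0 w1 b g hw e2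
  obtain ⟨c2, hc21, hc22⟩ := parCoef w0 w1 c h hw e3
  obtain ⟨c3, hc31, hc32⟩ := parCoef w0 w1 d k hw e4
  exact ⟨w0, w1, c0, c1, c2, c3, hw, hc01, hc02, hc11, hc12, hc21, hc22, hc31, hc32⟩

lemma pencil (h1 : a*h = c*e) (h2 : a*k + b*h = c*g + d*e) (h3 : b*k = d*g) :
    ROWS a b c d e g h k ∨ COLS a b c d e g h k := by
  by_cases ha : a = 0
  · by_cases hc : c = 0
    · by_cases hbd : b = 0 ∧ d = 0
      · exact Or.inr (mkCols 0 1 (by simp) (by simp [ha]) (by simp [hbd.1])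
          (by simp [hc]) (by simp [hbd.2]))
      · refine Or.inl (mkRows b d hbd (by rw [ha, hc]; ring) (by ring) ?_ ?_)
        · linear_combination -h2 + k*ha - g*hc
        · linear_combination -h3
    · have he : e = 0 := by
        have : c*e = 0 := by rw [← h1, ha, zero_mul]
        exact (mul_eq_zero.1 this).resolve_left hc
      by_cases hbg : b = 0 ∧ g = 0
      · exact Or.inl (mkRows 0 1 (by simp) (by simp [ha]) (by simp [hbg.1])
          (by simp [he]) (by simp [hbg.2]))
      · refine Or.inr (mkCols b g hbg (by rw [ha, he]; ring) (by ring) ?_ ?_)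
        · linear_combination -h2 + k*ha - d*he
        · linear_combination -h3
  · by_cases hmain : d*a = b*c ∧ k*a = g*c
    · refine Or.inl (mkRows a c (fun hh => ha hh.1) (by ring) ?_ ?_ ?_)
      · linear_combination -hmain.1
      · linear_combination -h1
      · linear_combination -hmain.2
    · have I1 : (b*e - a*g)*c = (d*e - a*k)*a := by linear_combination (-b)*h1 + a*h2
      have I2 : (b*e - a*g)*d = (d*e - a*k)*b := by linear_combination a*h3
      have I3 : (b*e - a*g)*k = (d*e - a*k)*g := by linear_combination e*h3
      have hab : ∃ hα : b*e - a*g = 0, True := by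
        by_cases hda : d*a = b*c
        · have hka : k*a ≠ g*c := fun hh => hmain ⟨hda, hh⟩
          have key : (b*e - a*g)*(c*g - k*a) = 0 := by linear_combination g*I1 - a*I3
          have hne : c*g - k*a ≠ 0 := fun hh => hka (by linear_combination -hh)
          exact ⟨(mul_eq_zero.1 key).resolve_right hne, trivial⟩
        · have key : (b*e - a*g)*(c*b - d*a) = 0 := by linear_combination b*I1 - a*I2
          have hne : c*b - d*a ≠ 0 := fun hh => hda (by linear_combination -hh)
          exact ⟨(mul_eq_zero.1 key).resolve_right hne, trivial⟩
      obtain ⟨hα, -⟩ := hab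
      have hβ : d*e - a*k = 0 := by
        have : (d*e - a*k)*a = 0 := by linear_combination -I1 + c*hα
        exact (mul_eq_zero.1 this).resolve_right ha
      refine Or.inr (mkCols a e (fun hh => ha hh.1) (by ring) ?_ ?_ ?_)
      · linear_combination hα
      · linear_combination -h1
      · linear_combination hβ
end


section axis2
variable {a b c d e g h k : ℂ}

lemma axisLemma
    (K : ∀ t : ℂ, (t = 1 ∨ t = -1 ∨ t = I ∨ t = -I) →
      (a + t*b)*(h + t*k) = (c + t*d)*(e + t*g) ∨
      ((a + t*b = 0) ∧ (h + t*k = 0)) ∨ ((c + t*d = 0) ∧ (e + t*g = 0))) :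
    (a*h = c*e ∧ a*k + b*h = c*g + d*e ∧ b*k = d*g)
    ∨ (a = 0 ∧ b = 0 ∧ h = 0 ∧ k = 0)
    ∨ (c = 0 ∧ d = 0 ∧ e = 0 ∧ g = 0)
    ∨ (((a=0∧b=0) ∨ (h=0∧k=0)) ∧ ((c=0∧d=0) ∨ (e=0∧g=0)))
    ∨ (∃ τ : ℂ, (τ = 1 ∨ τ = -1 ∨ τ = I ∨ τ = -I) ∧
        a + τ*b = 0 ∧ h + τ*k = 0 ∧ c = τ*d ∧ e = τ*g) := by
  have ne12 : (1:ℂ) ≠ -1 := by norm_num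
  have ne13 : (1:ℂ) ≠ I := by simp [Complex.ext_iff]
  have ne14 : (1:ℂ) ≠ -I := by simp [Complex.ext_iff]
  have ne23 : (-1:ℂ) ≠ I := by simp [Complex.ext_iff]
  have ne24 : (-1:ℂ) ≠ -I := by simp [Complex.ext_iff]
  have ne34 : I ≠ -I := by
    intro hh
    have := congrArg Complex.im hh
    norm_num at this
  have gp1 : (1:ℂ) + -1 = 0 := by ring
  have gp2 : (-1:ℂ) + 1 = 0 := by ring
  have gp3 : I + -I = 0 := by ring
  have gp4 : -I + I = 0 := by ring
  have h2 : I^2 = -1 := Complex.I_sq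
  have hD13 : ((-1:ℂ)-1)^2*((-I)-I)^2 - ((-I)-1)^2*((-1)-I)^2 ≠ 0 := fun hh => by
    have : (-12:ℂ) = 0 := by linear_combination hh - (11 - 4*I - I^2) * h2
    norm_num at this
  have hD14 : ((-1:ℂ)-1)^2*(I-(-I))^2 - (I-1)^2*((-1)-(-I))^2 ≠ 0 := fun hh => by
    have : (-12:ℂ) = 0 := by linear_combination hh - (11 + 4*I - I^2) * h2
    norm_num at this
  have hD23 : ((1:ℂ)-(-1))^2*((-I)-I)^2 - ((-I)-(-1))^2*((1)-I)^2 ≠ 0 := fun hh => by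
    have : (-12:ℂ) = 0 := by linear_combination hh - (11 + 4*I - I^2) * h2
    norm_num at this
  have hD24 : ((1:ℂ)-(-1))^2*(I-(-I))^2 - (I-(-1))^2*((1)-(-I))^2 ≠ 0 := fun hh => by
    have : (-12:ℂ) = 0 := by linear_combination hh - (11 - 4*I - I^2) * h2
    norm_num at this
  have hD31 : ((-1:ℂ)-I)^2*((-I)-1)^2 - ((-I)-I)^2*((-1)-1)^2 ≠ 0 := fun hh => by
    have : (12:ℂ) = 0 := by linear_combination hh - (-11 + 4*I + I^2) * h2
    norm_num at this
  have hD32 : ((1:ℂ)-I)^2*((-I)-(-1))^2 - ((-I)-I)^2*((1)-(-1))^2 ≠ 0 := fun hh => by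
    have : (12:ℂ) = 0 := by linear_combination hh - (-11 - 4*I + I^2) * h2
    norm_num at this
  have hD41 : ((-1:ℂ)-(-I))^2*(I-1)^2 - (I-(-I))^2*((-1)-1)^2 ≠ 0 := fun hh => by
    have : (12:ℂ) = 0 := by linear_combination hh - (-11 - 4*I + I^2) * h2
    norm_num at this
  have hD42 : ((1:ℂ)-(-I))^2*(I-(-1))^2 - (I-(-I))^2*((1)-(-1))^2 ≠ 0 := fun hh => by
    have : (12:ℂ) = 0 := by linear_combination hh - (-11 + 4*I + I^2) * h2
    norm_num at this
  rcases K 1 (Or.inl rfl) with c1 | c1 | c1 <;>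
    rcases K (-1) (Or.inr (Or.inl rfl)) with c2 | c2 | c2 <;>
      rcases K I (Or.inr (Or.inr (Or.inl rfl))) with c3 | c3 | c3 <;>
        rcases K (-I) (Or.inr (Or.inr (Or.inr rfl))) with c4 | c4 | c4 <;>
          first
          | exact Or.inl (subQuad 1 (-1) I ne12 ne13 ne23 c1 c2 c3)
          | exact Or.inl (subQuad 1 (-1) (-I) ne12 ne14 ne24 c1 c2 c4)
          | exact Or.inl (subQuad 1 I (-I) ne13 ne14 ne34 c1 c3 c4)
          | exact Or.inl (subQuad (-1) I (-I) ne23 ne24 ne34 c2 c3 c4)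
          | exact Or.inr (Or.inl (subB 1 (-1) ne12 c1 c2))
          | exact Or.inr (Or.inl (subB 1 I ne13 c1 c3))
          | exact Or.inr (Or.inl (subB 1 (-I) ne14 c1 c4))
          | exact Or.inr (Or.inl (subB (-1) I ne23 c2 c3))
          | exact Or.inr (Or.inl (subB (-1) (-I) ne24 c2 c4))
          | exact Or.inr (Or.inl (subB I (-I) ne34 c3 c4))
          | exact Or.inr (Or.inr (Or.inl (subC 1 (-1) ne12 c1 c2)))
          | exact Or.inr (Or.inr (Or.inl (subC 1 I ne13 c1 c3)))
          | exact Or.inr (Or.inr (Or.inl (subC 1 (-I) ne14 c1 c4)))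
          | exact Or.inr (Or.inr (Or.inl (subC (-1) I ne23 c2 c3)))
          | exact Or.inr (Or.inr (Or.inl (subC (-1) (-I) ne24 c2 c4)))
          | exact Or.inr (Or.inr (Or.inl (subC I (-I) ne34 c3 c4)))
          | exact Or.inr (Or.inr (Or.inr (Or.inr ⟨1, Or.inl rfl, subGood 1 (-1) gp1 c1 c2⟩)))
          | exact Or.inr (Or.inr (Or.inr (Or.inr ⟨-1, Or.inr (Or.inl rfl), subGood (-1) 1 gp2 c2 c1⟩)))
          | exact Or.inr (Or.inr (Or.inr (Or.inr ⟨I, Or.inr (Or.inr (Or.inl rfl)), subGood I (-I) gp3 c3 c4⟩)))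
          | exact Or.inr (Or.inr (Or.inr (Or.inr ⟨-I, Or.inr (Or.inr (Or.inr rfl)), subGood (-I) I gp4 c4 c3⟩)))
          | exact Or.inr (Or.inr (Or.inr (Or.inl (subBad 1 I (-1) (-I) hD13 c1 c3 c2 c4))))
          | exact Or.inr (Or.inr (Or.inr (Or.inl (subBad 1 (-I) (-1) I hD14 c1 c4 c2 c3))))
          | exact Or.inr (Or.inr (Or.inr (Or.inl (subBad (-1) I 1 (-I) hD23 c2 c3 c1 c4))))
          | exact Or.inr (Or.inr (Or.inr (Or.inl (subBad (-1) (-I) 1 I hD24 c2 c4 c1 c3))))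
          | exact Or.inr (Or.inr (Or.inr (Or.inl (subBad I 1 (-1) (-I) hD31 c3 c1 c2 c4))))
          | exact Or.inr (Or.inr (Or.inr (Or.inl (subBad I (-1) 1 (-I) hD32 c3 c2 c1 c4))))
          | exact Or.inr (Or.inr (Or.inr (Or.inl (subBad (-I) 1 (-1) I hD41 c4 c1 c2 c3))))
          | exact Or.inr (Or.inr (Or.inr (Or.inl (subBad (-I) (-1) 1 I hD42 c4 c2 c1 c3))))

end axis2

lemma axisFull {a b c d e g h k : ℂ}
    (T2 : ∀ t : ℂ, (t = 1 ∨ t = -1 ∨ t = I ∨ t = -I) →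
      (a + t*b)*(h + t*k) = (c + t*d)*(e + t*g) ∨
      ((a + t*b = 0) ∧ (h + t*k = 0)) ∨ ((c + t*d = 0) ∧ (e + t*g = 0)))
    (T1 : ∀ t : ℂ, (t = 1 ∨ t = -1 ∨ t = I ∨ t = -I) →
      (a + t*c)*(g + t*k) = (b + t*d)*(e + t*h) ∨
      ((a + t*c = 0) ∧ (g + t*k = 0)) ∨ ((b + t*d = 0) ∧ (e + t*h = 0)))
    (T0 : ∀ t : ℂ, (t = 1 ∨ t = -1 ∨ t = I ∨ t = -I) →
      (a + t*e)*(d + t*k) = (b + t*g)*(c + t*h) ∨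
      ((a + t*e = 0) ∧ (d + t*k = 0)) ∨ ((b + t*g = 0) ∧ (c + t*h = 0))) :
    PS a b c d e g h k
    ∨ (∃ τ : ℂ, (τ = 1 ∨ τ = -1 ∨ τ = I ∨ τ = -I) ∧
        a + τ*b = 0 ∧ h + τ*k = 0 ∧ c = τ*d ∧ e = τ*g) := by
  rcases axisLemma T2 with hA | hB | hC | hE | hD
  · -- pencil identically singular
    left
    rcases pencil hA.1 hA.2.1 hA.2.2 with
      ⟨w0,w1,C00,C01,C10,C11,hw,ea,ec,eb,ed,ee,eh,eg,ek⟩ |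
      ⟨w0,w1,C00,C01,C10,C11,hw,ea,ee,eb,eg,ec,eh,ed,ek⟩
    · -- f = w(x1) ⬝ C(x0,x2), use T1
      obtain ⟨t, htm, hs⟩ : ∃ t : ℂ, (t = 1 ∨ t = -1 ∨ t = I ∨ t = -I) ∧ w0 + t*w1 ≠ 0 := by
        by_cases hsum : w0 + 1*w1 = 0
        · refine ⟨-1, Or.inr (Or.inl rfl), fun hh => hw ⟨?_, ?_⟩⟩
          · linear_combination hsum/2 + hh/2
          · linear_combination hsum/2 - hh/2
        · exact ⟨1, Or.inl rfl, hsum⟩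
      rcases T1 t htm with hdet | hdg | hat
      · rw [ea, ec, eg, ek, eb, ed, ee, eh] at hdet
        have key : (w0 + t*w1)^2 * (C00*C11 - C01*C10) = 0 := by linear_combination hdet
        have hCC : C00*C11 = C01*C10 := by
          have := (mul_eq_zero.1 key).resolve_left (pow_ne_zero 2 hs)
          linear_combination this
        obtain ⟨m0,m1,n0,n1,r1,r2,r3,r4⟩ := rank1 C00 C01 C10 C11 hCC
        exact Or.inl ⟨m0,m1,w0,w1,n0,n1,
          by linear_combination ea + w0*r1, by linear_combination eb + w0*r2,
          by linear_combination ec + w1*r1, by linear_combination ed + w1*r2,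
          by linear_combination ee + w0*r3, by linear_combination eg + w0*r4,
          by linear_combination eh + w1*r3, by linear_combination ek + w1*r4⟩
      · -- C00 = 0 ∧ C11 = 0 : zeros a c g k, V5
        rw [ea, ec] at hdg
        rw [eg, ek] at hdg
        have hC00 : C00 = 0 := by
          have h1 : (w0 + t*w1) * C00 = 0 := by linear_combination hdg.1
          exact (mul_eq_zero.1 h1).resolve_left hs
        have hC11 : C11 = 0 := by
          have h1 : (w0 + t*w1) * C11 = 0 := by linear_combination hdg.2
          exact (mul_eq_zero.1 h1).resolve_left hs
        refine Or.inr (Or.inr (Or.inr (Or.inr (Or.inl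
          ⟨by rw [ea, hC00, zero_mul], by rw [ec, hC00, zero_mul],
           by rw [eg, hC11, zero_mul], by rw [ek, hC11, zero_mul],
           by rw [eb, eh, ed, ee]; ring⟩))))
      · -- C01 = 0 ∧ C10 = 0 : zeros b d e h, V4
        rw [eb, ed] at hat
        rw [ee, eh] at hat
        have hC01 : C01 = 0 := by
          have h1 : (w0 + t*w1) * C01 = 0 := by linear_combination hat.1
          exact (mul_eq_zero.1 h1).resolve_left hs
        have hC10 : C10 = 0 := by
          have h1 : (w0 + t*w1) * C10 = 0 := by linear_combination hat.2
          exact (mul_eq_zero.1 h1).resolve_left hs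
        refine Or.inr (Or.inr (Or.inr (Or.inl
          ⟨by rw [eb, hC01, zero_mul], by rw [ed, hC01, zero_mul],
           by rw [ee, hC10, zero_mul], by rw [eh, hC10, zero_mul],
           by rw [ea, ek, ec, eg]; ring⟩)))
    · -- f = w(x0) ⬝ C(x1,x2), use T0
      obtain ⟨t, htm, hs⟩ : ∃ t : ℂ, (t = 1 ∨ t = -1 ∨ t = I ∨ t = -I) ∧ w0 + t*w1 ≠ 0 := by
        by_cases hsum : w0 + 1*w1 = 0
        · refine ⟨-1, Or.inr (Or.inl rfl), fun hh => hw ⟨?_, ?_⟩⟩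
          · linear_combination hsum/2 + hh/2
          · linear_combination hsum/2 - hh/2
        · exact ⟨1, Or.inl rfl, hsum⟩
      rcases T0 t htm with hdet | hdg | hat
      · rw [ea, ee, ed, ek, eb, eg, ec, eh] at hdet
        have key : (w0 + t*w1)^2 * (C00*C11 - C01*C10) = 0 := by linear_combination hdet
        have hCC : C00*C11 = C01*C10 := by
          have := (mul_eq_zero.1 key).resolve_left (pow_ne_zero 2 hs)
          linear_combination this
        obtain ⟨m0,m1,n0,n1,r1,r2,r3,r4⟩ := rank1 C00 C01 C10 C11 hCC
        exact Or.inl ⟨w0,w1,m0,m1,n0,n1,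
          by linear_combination ea + w0*r1, by linear_combination eb + w0*r2,
          by linear_combination ec + w0*r3, by linear_combination ed + w0*r4,
          by linear_combination ee + w1*r1, by linear_combination eg + w1*r2,
          by linear_combination eh + w1*r3, by linear_combination ek + w1*r4⟩
      · -- C00 = C11 = 0: zeros a e d k, V3
        rw [ea, ee] at hdg
        rw [ed, ek] at hdg
        have hC00 : C00 = 0 := by
          have h1 : (w0 + t*w1) * C00 = 0 := by linear_combination hdg.1
          exact (mul_eq_zero.1 h1).resolve_left hs
        have hC11 : C11 = 0 := by
          have h1 : (w0 + t*w1) * C11 = 0 := by linear_combination hdg.2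
          exact (mul_eq_zero.1 h1).resolve_left hs
        refine Or.inr (Or.inr (Or.inl
          ⟨by rw [ea, hC00, zero_mul], by rw [ed, hC11, zero_mul],
           by rw [ee, hC00, zero_mul], by rw [ek, hC11, zero_mul],
           by rw [eb, eh, ec, eg]; ring⟩))
      · -- C01 = C10 = 0: zeros b g c h, V2
        rw [eb, eg] at hat
        rw [ec, eh] at hat
        have hC01 : C01 = 0 := by
          have h1 : (w0 + t*w1) * C01 = 0 := by linear_combination hat.1
          exact (mul_eq_zero.1 h1).resolve_left hs
        have hC10 : C10 = 0 := by
          have h1 : (w0 + t*w1) * C10 = 0 := by linear_combination hat.2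
          exact (mul_eq_zero.1 h1).resolve_left hs
        refine Or.inr (Or.inl
          ⟨by rw [eb, hC01, zero_mul], by rw [ec, hC10, zero_mul],
           by rw [eg, hC01, zero_mul], by rw [eh, hC10, zero_mul],
           by rw [ea, ek, ed, ee]; ring⟩)
  · -- B: a = b = h = k = 0
    obtain ⟨ha0, hb0, hh0, hk0⟩ := hB
    left
    rcases T1 1 (Or.inl rfl) with hdet | hdg | hat
    · rw [ha0, hb0, hh0, hk0] at hdet
      refine Or.inr (Or.inr (Or.inr (Or.inr (Or.inr (Or.inr (Or.inl
        ⟨ha0, hb0, hh0, hk0, by linear_combination hdet⟩))))))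
    · rw [ha0] at hdg; rw [hk0] at hdg
      have hc0 : c = 0 := by linear_combination hdg.1
      have hg0 : g = 0 := by linear_combination hdg.2
      exact Or.inr (Or.inr (Or.inr (Or.inr (Or.inr (Or.inr (Or.inr (Or.inr (Or.inr (Or.inr
        ⟨ha0, hb0, hc0, hg0, hh0, hk0⟩)))))))))
    · rw [hb0] at hat; rw [hh0] at hat
      have hd0 : d = 0 := by linear_combination hat.1
      have he0 : e = 0 := by linear_combination hat.2
      exact Or.inr (Or.inr (Or.inr (Or.inr (Or.inr (Or.inr (Or.inr (Or.inr (Or.inr (Or.inl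
        ⟨ha0, hb0, hd0, he0, hh0, hk0⟩)))))))))
  · -- C: c = d = e = g = 0
    obtain ⟨hc0, hd0, he0, hg0⟩ := hC
    left
    rcases T1 1 (Or.inl rfl) with hdet | hdg | hat
    · rw [hc0, hd0, he0, hg0] at hdet
      refine Or.inr (Or.inr (Or.inr (Or.inr (Or.inr (Or.inl
        ⟨hc0, hd0, he0, hg0, by linear_combination hdet⟩)))))
    · rw [hc0] at hdg; rw [hg0] at hdg
      have ha0 : a = 0 := by linear_combination hdg.1
      have hk0 : k = 0 := by linear_combination hdg.2
      exact Or.inr (Or.inr (Or.inr (Or.inr (Or.inr (Or.inr (Or.inr (Or.inr (Or.inl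
        ⟨ha0, hc0, hd0, he0, hg0, hk0⟩))))))))
    · rw [hd0] at hat; rw [he0] at hat
      have hb0 : b = 0 := by linear_combination hat.1
      have hh0 : h = 0 := by linear_combination hat.2
      exact Or.inr (Or.inr (Or.inr (Or.inr (Or.inr (Or.inr (Or.inr (Or.inl
        ⟨hb0, hc0, hd0, he0, hg0, hh0⟩)))))))
  · -- E
    left
    rcases hE with ⟨⟨ha0, hb0⟩ | ⟨hh0, hk0⟩, ⟨hc0, hd0⟩ | ⟨he0, hg0⟩⟩
    · -- a=b=c=d=0, use T0 at 1
      rcases T0 1 (Or.inl rfl) with hdet | hdg | hat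
      · rw [ha0, hb0, hc0, hd0] at hdet
        have hek : e*k = g*h := by linear_combination hdet
        obtain ⟨m0,m1,n0,n1,r1,r2,r3,r4⟩ := rank1 e g h k (by linear_combination hek)
        exact Or.inl ⟨0,1,m0,m1,n0,n1,
          by rw [ha0]; ring, by rw [hb0]; ring, by rw [hc0]; ring, by rw [hd0]; ring,
          by linear_combination r1, by linear_combination r2,
          by linear_combination r3, by linear_combination r4⟩
      · rw [ha0] at hdg; rw [hd0] at hdg
        have he0 : e = 0 := by linear_combination hdg.1
        have hk0 : k = 0 := by linear_combination hdg.2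
        exact Or.inr (Or.inr (Or.inl ⟨ha0, hd0, he0, hk0,
          by rw [hb0, hc0]; ring⟩))
      · rw [hb0] at hat; rw [hc0] at hat
        have hg0 : g = 0 := by linear_combination hat.1
        have hh0 : h = 0 := by linear_combination hat.2
        exact Or.inr (Or.inl ⟨hb0, hc0, hg0, hh0, by rw [ha0, hd0]; ring⟩)
    · -- a=b=e=g=0, use T1 at 1
      rcases T1 1 (Or.inl rfl) with hdet | hdg | hat
      · rw [ha0, hb0, he0, hg0] at hdet
        have hck : c*k = d*h := by linear_combination hdet
        obtain ⟨m0,m1,n0,n1,r1,r2,r3,r4⟩ := rank1 c d h k (by linear_combination hck)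
        exact Or.inl ⟨m0,m1,0,1,n0,n1,
          by rw [ha0]; ring, by rw [hb0]; ring,
          by linear_combination r1, by linear_combination r2,
          by rw [he0]; ring, by rw [hg0]; ring,
          by linear_combination r3, by linear_combination r4⟩
      · rw [ha0] at hdg; rw [hg0] at hdg
        have hc0 : c = 0 := by linear_combination hdg.1
        have hk0 : k = 0 := by linear_combination hdg.2
        exact Or.inr (Or.inr (Or.inr (Or.inr (Or.inl ⟨ha0, hc0, hg0, hk0,
          by rw [hb0, he0]; ring⟩))))
      · rw [hb0] at hat; rw [he0] at hat
        have hd0 : d = 0 := by linear_combination hat.1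
        have hh0 : h = 0 := by linear_combination hat.2
        exact Or.inr (Or.inr (Or.inr (Or.inl ⟨hb0, hd0, he0, hh0,
          by rw [ha0, hg0]; ring⟩)))
    · -- c=d=h=k=0, use T1 at 1
      rcases T1 1 (Or.inl rfl) with hdet | hdg | hat
      · rw [hc0, hd0, hh0, hk0] at hdet
        have hag : a*g = b*e := by linear_combination hdet
        obtain ⟨m0,m1,n0,n1,r1,r2,r3,r4⟩ := rank1 a b e g (by linear_combination hag)
        exact Or.inl ⟨m0,m1,1,0,n0,n1,
          by linear_combination r1, by linear_combination r2,
          by rw [hc0]; ring, by rw [hd0]; ring,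
          by linear_combination r3, by linear_combination r4,
          by rw [hh0]; ring, by rw [hk0]; ring⟩
      · rw [hc0] at hdg; rw [hk0] at hdg
        have ha0 : a = 0 := by linear_combination hdg.1
        have hg0 : g = 0 := by linear_combination hdg.2
        exact Or.inr (Or.inr (Or.inr (Or.inr (Or.inl ⟨ha0, hc0, hg0, hk0,
          by rw [hh0, hd0]; ring⟩))))
      · rw [hd0] at hat; rw [hh0] at hat
        have hb0 : b = 0 := by linear_combination hat.1
        have he0 : e = 0 := by linear_combination hat.2
        exact Or.inr (Or.inr (Or.inr (Or.inl ⟨hb0, hd0, he0, hh0,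
          by rw [hk0, hc0]; ring⟩)))
    · -- e=g=h=k=0, use T0 at 1
      rcases T0 1 (Or.inl rfl) with hdet | hdg | hat
      · rw [he0, hg0, hh0, hk0] at hdet
        have had : a*d = b*c := by linear_combination hdet
        obtain ⟨m0,m1,n0,n1,r1,r2,r3,r4⟩ := rank1 a b c d (by linear_combination had)
        exact Or.inl ⟨1,0,m0,m1,n0,n1,
          by linear_combination r1, by linear_combination r2,
          by linear_combination r3, by linear_combination r4,
          by rw [he0]; ring, by rw [hg0]; ring,
          by rw [hh0]; ring, by rw [hk0]; ring⟩
      · rw [he0] at hdg; rw [hk0] at hdg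
        have ha0 : a = 0 := by linear_combination hdg.1
        have hd0 : d = 0 := by linear_combination hdg.2
        exact Or.inr (Or.inr (Or.inl ⟨ha0, hd0, he0, hk0,
          by rw [hh0, hg0]; ring⟩))
      · rw [hg0] at hat; rw [hh0] at hat
        have hb0 : b = 0 := by linear_combination hat.1
        have hc0 : c = 0 := by linear_combination hat.2
        exact Or.inr (Or.inl ⟨hb0, hc0, hg0, hh0,
          by rw [hk0, he0]; ring⟩)
  · exact Or.inr hD

lemma main_algebra {a b c d e g h k : ℂ}
    (T2 : ∀ t : ℂ, (t = 1 ∨ t = -1 ∨ t = I ∨ t = -I) →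
      (a + t*b)*(h + t*k) = (c + t*d)*(e + t*g) ∨
      ((a + t*b = 0) ∧ (h + t*k = 0)) ∨ ((c + t*d = 0) ∧ (e + t*g = 0)))
    (T1 : ∀ t : ℂ, (t = 1 ∨ t = -1 ∨ t = I ∨ t = -I) →
      (a + t*c)*(g + t*k) = (b + t*d)*(e + t*h) ∨
      ((a + t*c = 0) ∧ (g + t*k = 0)) ∨ ((b + t*d = 0) ∧ (e + t*h = 0)))
    (T0 : ∀ t : ℂ, (t = 1 ∨ t = -1 ∨ t = I ∨ t = -I) →
      (a + t*e)*(d + t*k) = (b + t*g)*(c + t*h) ∨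
      ((a + t*e = 0) ∧ (d + t*k = 0)) ∨ ((b + t*g = 0) ∧ (c + t*h = 0))) :
    PS a b c d e g h k
    ∨ (∃ lam c1 c2 c3 : ℂ,
        (c1 = 1 ∨ c1 = -1 ∨ c1 = I ∨ c1 = -I) ∧
        (c2 = 1 ∨ c2 = -1 ∨ c2 = I ∨ c2 = -I) ∧
        (c3 = 1 ∨ c3 = -1 ∨ c3 = I ∨ c3 = -I) ∧
        a = lam ∧ b = lam*c3 ∧ c = lam*c2 ∧ d = -(lam*c2*c3) ∧ e = lam*c1 ∧
        g = -(lam*c1*c3) ∧ h = -(lam*c1*c2) ∧ k = -(lam*c1*c2*c3)) := by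
  rcases axisFull T2 T1 T0 with hPS | ⟨τ, τm, hτ1, hτ2, hτ3, hτ4⟩
  · exact Or.inl hPS
  -- rotated call 1 : values (a e b g c h d k)
  have T1G : ∀ t : ℂ, (t = 1 ∨ t = -1 ∨ t = I ∨ t = -I) →
      (a + t*b)*(h + t*k) = (e + t*g)*(c + t*d) ∨
      ((a + t*b = 0) ∧ (h + t*k = 0)) ∨ ((e + t*g = 0) ∧ (c + t*d = 0)) := by
    intro t ht
    rcases T2 t ht with hh | hh | hh
    · exact Or.inl (by linear_combination hh)
    · exact Or.inr (Or.inl hh)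
    · exact Or.inr (Or.inr ⟨hh.2, hh.1⟩)
  have T0G : ∀ t : ℂ, (t = 1 ∨ t = -1 ∨ t = I ∨ t = -I) →
      (a + t*c)*(g + t*k) = (e + t*h)*(b + t*d) ∨
      ((a + t*c = 0) ∧ (g + t*k = 0)) ∨ ((e + t*h = 0) ∧ (b + t*d = 0)) := by
    intro t ht
    rcases T1 t ht with hh | hh | hh
    · exact Or.inl (by linear_combination hh)
    · exact Or.inr (Or.inl hh)
    · exact Or.inr (Or.inr ⟨hh.2, hh.1⟩)
  rcases axisFull (a := a) (b := e) (c := b) (d := g) (e := c) (g := h) (h := d) (k := k)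
      T0 T1G T0G with hPS | ⟨σ, σm, hσ1, hσ2, hσ3, hσ4⟩
  · exact Or.inl (ps_rot hPS)
  -- rotated call 2 : values (a c e h b d g k)
  have T2G2 : ∀ t : ℂ, (t = 1 ∨ t = -1 ∨ t = I ∨ t = -I) →
      (a + t*c)*(g + t*k) = (e + t*h)*(b + t*d) ∨
      ((a + t*c = 0) ∧ (g + t*k = 0)) ∨ ((e + t*h = 0) ∧ (b + t*d = 0)) := T0G
  have T1G2 : ∀ t : ℂ, (t = 1 ∨ t = -1 ∨ t = I ∨ t = -I) →
      (a + t*e)*(d + t*k) = (c + t*h)*(b + t*g) ∨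
      ((a + t*e = 0) ∧ (d + t*k = 0)) ∨ ((c + t*h = 0) ∧ (b + t*g = 0)) := by
    intro t ht
    rcases T0 t ht with hh | hh | hh
    · exact Or.inl (by linear_combination hh)
    · exact Or.inr (Or.inl hh)
    · exact Or.inr (Or.inr ⟨hh.2, hh.1⟩)
  rcases axisFull (a := a) (b := c) (c := e) (d := h) (e := b) (g := d) (h := g) (k := k)
      T2G2 T1G2 T2 with hPS | ⟨ρ, ρm, hρ1, hρ2, hρ3, hρ4⟩
  · exact Or.inl (ps_rot (ps_rot hPS))
  · -- all three axes in case D : assemble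
    right
    have hτ0 : τ ≠ 0 := by
      rcases τm with hh | hh | hh | hh <;> rw [hh] <;> norm_num [Complex.I_ne_zero]
    have hσ0 : σ ≠ 0 := by
      rcases σm with hh | hh | hh | hh <;> rw [hh] <;> norm_num [Complex.I_ne_zero]
    have hρ0 : ρ ≠ 0 := by
      rcases ρm with hh | hh | hh | hh <;> rw [hh] <;> norm_num [Complex.I_ne_zero]
    refine ⟨a, -σ⁻¹, -ρ⁻¹, -τ⁻¹, ?_, ?_, ?_, rfl, ?_, ?_, ?_, ?_, ?_, ?_, ?_⟩
    · rcases σm with hh | hh | hh | hh <;> rw [hh] <;> norm_num [Complex.inv_I, inv_neg]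
    · rcases ρm with hh | hh | hh | hh <;> rw [hh] <;> norm_num [Complex.inv_I, inv_neg]
    · rcases τm with hh | hh | hh | hh <;> rw [hh] <;> norm_num [Complex.inv_I, inv_neg]
    · -- b = a * -τ⁻¹
      field_simp
      linear_combination hτ1
    · -- c = a * -ρ⁻¹
      field_simp
      linear_combination hρ1
    · -- d = -(a * -ρ⁻¹ * -τ⁻¹)
      field_simp
      linear_combination hρ1 - ρ*hτ3
    · -- e = a * -σ⁻¹
      field_simp
      linear_combination hσ1
    · -- g = -(a * -σ⁻¹ * -τ⁻¹)
      field_simp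
      linear_combination hτ1 - τ*hσ3
    · -- h = -(a * -σ⁻¹ * -ρ⁻¹)
      field_simp
      linear_combination hσ1 - σ*hρ3
    · -- k = -(a * -σ⁻¹ * -ρ⁻¹ * -τ⁻¹)
      field_simp
      linear_combination σ*ρ*hτ2 - hσ1 + σ*hρ3


/-- here `h(0)=h(1)=1`, `h(2)=h(3)=-1` is expressed by the
`if (x 0).val + (x 1).val + (x 2).val ≤ 1` test, and `cᵢ^{xᵢ}` by `cᵢ ^ (x i).val`. -/
theorem product_with_symmetric_one_one_negone_negone
    (f : (Fin 3 → ZMod 2) → ℂ) (hf : ¬ IsProductType f)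
    (hprod : ∀ (i : Fin 3) (b : ℂ),
      (b = 1 ∨ b = -1 ∨ b = Complex.I ∨ b = -Complex.I) →
      IsProductType (del f i 1 b)) :
    ∃ lam c₁ c₂ c₃ : ℂ,
      (c₁ = 1 ∨ c₁ = -1 ∨ c₁ = Complex.I ∨ c₁ = -Complex.I) ∧
      (c₂ = 1 ∨ c₂ = -1 ∨ c₂ = Complex.I ∨ c₂ = -Complex.I) ∧
      (c₃ = 1 ∨ c₃ = -1 ∨ c₃ = Complex.I ∨ c₃ = -Complex.I) ∧
      ∀ x : Fin 3 → ZMod 2,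
        f x = lam * c₁ ^ (x 0).val * c₂ ^ (x 1).val * c₃ ^ (x 2).val *
          (if (x 0).val + (x 1).val + (x 2).val ≤ 1 then 1 else -1) := by
  have del2_eval : ∀ (t : ℂ) (y0 y1 : ZMod 2),
      del f 2 1 t ![y0,y1] = f ![y0,y1,0] + t * f ![y0,y1,1] := by
    intro t y0 y1
    show 1 * f ((2:Fin 3).insertNth 0 ![y0,y1]) + t * f ((2:Fin 3).insertNth 1 ![y0,y1]) = _
    rw [ins2, ins2]
    simp [Matrix.cons_val_zero, Matrix.cons_val_one, Matrix.head_cons]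
  have del1_eval : ∀ (t : ℂ) (y0 y1 : ZMod 2),
      del f 1 1 t ![y0,y1] = f ![y0,0,y1] + t * f ![y0,1,y1] := by
    intro t y0 y1
    show 1 * f ((1:Fin 3).insertNth 0 ![y0,y1]) + t * f ((1:Fin 3).insertNth 1 ![y0,y1]) = _
    rw [ins1, ins1]
    simp [Matrix.cons_val_zero, Matrix.cons_val_one, Matrix.head_cons]
  have del0_eval : ∀ (t : ℂ) (y0 y1 : ZMod 2),
      del f 0 1 t ![y0,y1] = f ![0,y0,y1] + t * f ![1,y0,y1] := by
    intro t y0 y1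
    show 1 * f ((0:Fin 3).insertNth 0 ![y0,y1]) + t * f ((0:Fin 3).insertNth 1 ![y0,y1]) = _
    rw [ins0, ins0]
    simp [Matrix.cons_val_zero, Matrix.cons_val_one, Matrix.head_cons]
  have T2 : ∀ t : ℂ, (t = 1 ∨ t = -1 ∨ t = I ∨ t = -I) →
      (f ![0,0,0] + t*f ![0,0,1])*(f ![1,1,0] + t*f ![1,1,1]) =
        (f ![0,1,0] + t*f ![0,1,1])*(f ![1,0,0] + t*f ![1,0,1]) ∨
      ((f ![0,0,0] + t*f ![0,0,1] = 0) ∧ (f ![1,1,0] + t*f ![1,1,1] = 0)) ∨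
      ((f ![0,1,0] + t*f ![0,1,1] = 0) ∧ (f ![1,0,0] + t*f ![1,0,1] = 0)) := by
    intro t ht
    have hb := binExtract _ (hprod 2 t ht)
    rw [del2_eval t 0 0, del2_eval t 1 1, del2_eval t 0 1, del2_eval t 1 0] at hb
    exact hb
  have T1 : ∀ t : ℂ, (t = 1 ∨ t = -1 ∨ t = I ∨ t = -I) →
      (f ![0,0,0] + t*f ![0,1,0])*(f ![1,0,1] + t*f ![1,1,1]) =
        (f ![0,0,1] + t*f ![0,1,1])*(f ![1,0,0] + t*f ![1,1,0]) ∨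
      ((f ![0,0,0] + t*f ![0,1,0] = 0) ∧ (f ![1,0,1] + t*f ![1,1,1] = 0)) ∨
      ((f ![0,0,1] + t*f ![0,1,1] = 0) ∧ (f ![1,0,0] + t*f ![1,1,0] = 0)) := by
    intro t ht
    have hb := binExtract _ (hprod 1 t ht)
    rw [del1_eval t 0 0, del1_eval t 1 1, del1_eval t 0 1, del1_eval t 1 0] at hb
    exact hb
  have T0 : ∀ t : ℂ, (t = 1 ∨ t = -1 ∨ t = I ∨ t = -I) →
      (f ![0,0,0] + t*f ![1,0,0])*(f ![0,1,1] + t*f ![1,1,1]) =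
        (f ![0,0,1] + t*f ![1,0,1])*(f ![0,1,0] + t*f ![1,1,0]) ∨
      ((f ![0,0,0] + t*f ![1,0,0] = 0) ∧ (f ![0,1,1] + t*f ![1,1,1] = 0)) ∨
      ((f ![0,0,1] + t*f ![1,0,1] = 0) ∧ (f ![0,1,0] + t*f ![1,1,0] = 0)) := by
    intro t ht
    have hb := binExtract _ (hprod 0 t ht)
    rw [del0_eval t 0 0, del0_eval t 1 1, del0_eval t 0 1, del0_eval t 1 0] at hb
    exact hb
  rcases main_algebra T2 T1 T0 with hPS | ⟨lam, c1, c2, c3, m1, m2, m3,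
    ha, hb, hc, hd, he, hg, hh, hk⟩
  · exact absurd (ps_implies f hPS) hf
  refine ⟨lam, c1, c2, c3, m1, m2, m3, ?_⟩
  intro x
  have hv0 : (0 : ZMod 2).val = 0 := rfl
  have hv1 : (1 : ZMod 2).val = 1 := rfl
  rcases cube_cases x with hx|hx|hx|hx|hx|hx|hx|hx <;> rw [hx] <;>
    simp [ZMod.val_one, ZMod.val_zero, ha, hb, hc, hd, he, hg, hh, hk] <;> ring
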